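/- Let G be a weighted undirected graph partitioned into subgraphs G_1, ..., G_k with boundary vertex sets B_1, ..., B_k and B = B_1 ∪ ... ∪ B_k. Construct the overlay graph G̃ on vertex set B whose edges are: (1) for each partition i and each pair b_1, b_2 ∈ B_i, an edge of weight d_{G_i}(b_1, b_2) equal to the shortest-path distance between b_1 and b_2 restricted to the subgraph G_i (the local partition distance); and (2) every inter-partition edge of G (i.e., edges whose endpoints are boundary vertices of different partitions) with its original weight. Then for all s, t ∈ B, the shortest distance in the overlay graph equals the shortest distance in G: d_G(s,t) = d_{G̃}(s,t). -/

import Mathlib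

open scoped ENNReal Classical

namespace PSP

/-- A weighted undirected graph: symmetric adjacency and a weight function
with values in `ℝ≥0∞` (so weights are non-negative). -/
structure WGraph (V : Type*) where
  Adj : V → V → Prop
  symm : ∀ {u v}, Adj u v → Adj v u
  w : V → V → ℝ≥0∞

variable {V : Type*} {ι : Type*}

/-- Sum of `f` over consecutive pairs of a list. -/
noncomputable def pairSum (f : V → V → ℝ≥0∞) : List V → ℝ≥0∞
  | a :: b :: rest => f a b + pairSum f (b :: rest)
  | _ => 0

/-- Weighted length of a walk (given as a list of vertices). -/
noncomputable def wlen (G : WGraph V) (l : List V) : ℝ≥0∞ := pairSum G.w l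

/-- `l` is a walk in `G` from `s` to `t`: consecutive vertices are adjacent,
the first vertex is `s` and the last is `t`. -/
def IsWalk (G : WGraph V) (s t : V) (l : List V) : Prop :=
  l.Chain' G.Adj ∧ l.head? = some s ∧ l.getLast? = some t

/-- Shortest-path distance in `G` (`⊤` if no walk exists). -/
noncomputable def dist (G : WGraph V) (s t : V) : ℝ≥0∞ :=
  sInf {x | ∃ l, IsWalk G s t l ∧ wlen G l = x}

/-- Induced subgraph on a vertex set `S`. -/
def induce (G : WGraph V) (S : Set V) : WGraph V where
  Adj u v := G.Adj u v ∧ u ∈ S ∧ v ∈ S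
  symm h := ⟨G.symm h.1, h.2.2, h.2.1⟩
  w := G.w

/-- A partition of the vertex set is given by a function `P : V → ι`
assigning each vertex its partition index. The set of all boundary
vertices: vertices having a neighbor in another partition. -/
def bdry (G : WGraph V) (P : V → ι) : Set V :=
  {v | ∃ u, G.Adj v u ∧ P u ≠ P v}

/-- Boundary vertices of partition `i`. -/
def bdryIn (G : WGraph V) (P : V → ι) (i : ι) : Set V :=
  {v | P v = i ∧ ∃ u, G.Adj v u ∧ P u ≠ i}

/-- The induced subgraph `G_i` of partition `i`. -/
def partGraph (G : WGraph V) (P : V → ι) (i : ι) : WGraph V :=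
  induce G {x | P x = i}

/-- The No-Boundary overlay graph `G̃`: vertices are boundary vertices; for each
partition, each boundary pair gets an edge of weight equal to the *local*
partition distance; inter-partition edges of `G` keep their original weight. -/
noncomputable def overlay (G : WGraph V) (P : V → ι) : WGraph V where
  Adj u v := (P u = P v ∧ u ∈ bdry G P ∧ v ∈ bdry G P) ∨ (P u ≠ P v ∧ G.Adj u v)
  symm := by
    rintro u v (⟨h1, h2, h3⟩ | ⟨h1, h2⟩)
    · exact Or.inl ⟨h1.symm, h3, h2⟩
    · exact Or.inr ⟨fun h => h1 h.symm, G.symm h2⟩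
  w u v := if P u = P v then dist (partGraph G P (P u)) u v else G.w u v

/-- A half-connected boundary vertex: has a non-boundary neighbor in its own partition. -/
def halfC (G : WGraph V) (P : V → ι) (b : V) : Prop :=
  b ∈ bdry G P ∧ ∃ u, G.Adj b u ∧ P u = P b ∧ u ∉ bdry G P

/-- A full-connected boundary vertex: all in-partition neighbors are boundary vertices. -/
def fullC (G : WGraph V) (P : V → ι) (b : V) : Prop :=
  b ∈ bdry G P ∧ ∀ u, G.Adj b u → P u = P b → u ∈ bdry G P

/-- The pruned overlay graph `G̃'`, with inserted boundary-pair weights `ω`: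
edges among half-connected boundary pairs of the same partition (weight `ω`),
all inter-partition edges, and the original in-partition adjacent edges of
full-connected boundary vertices. -/
noncomputable def pruned (G : WGraph V) (P : V → ι) (ω : V → V → ℝ≥0∞) : WGraph V where
  Adj u v :=
    (P u = P v ∧ halfC G P u ∧ halfC G P v) ∨
    (P u ≠ P v ∧ G.Adj u v) ∨
    (P u = P v ∧ G.Adj u v ∧ u ∈ bdry G P ∧ v ∈ bdry G P ∧ (fullC G P u ∨ fullC G P v))
  symm := by
    rintro u v (⟨h1, h2, h3⟩ | ⟨h1, h2⟩ | ⟨h1, h2, h3, h4, h5⟩)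
    · exact Or.inl ⟨h1.symm, h3, h2⟩
    · exact Or.inr (Or.inl ⟨fun h => h1 h.symm, G.symm h2⟩)
    · exact Or.inr (Or.inr ⟨h1.symm, G.symm h2, h4, h3, h5.symm⟩)
  w u v := if P u = P v ∧ halfC G P u ∧ halfC G P v then ω u v else G.w u v

/-- The augmented partition graph `G'_i`: the induced subgraph `G_i` plus, for each
boundary pair `b₁ b₂ ∈ B_i`, an inserted edge of weight `ω b₁ b₂` (taking the
minimum with an already-existing edge weight). -/
noncomputable def augment (G : WGraph V) (P : V → ι) (i : ι) (ω : V → V → ℝ≥0∞) : WGraph V where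
  Adj u v := (G.Adj u v ∧ P u = i ∧ P v = i) ∨ (u ∈ bdryIn G P i ∧ v ∈ bdryIn G P i)
  symm := by
    rintro u v (⟨h1, h2, h3⟩ | ⟨h1, h2⟩)
    · exact Or.inl ⟨G.symm h1, h3, h2⟩
    · exact Or.inr ⟨h2, h1⟩
  w u v :=
    if u ∈ bdryIn G P i ∧ v ∈ bdryIn G P i then
      (if G.Adj u v ∧ P u = i ∧ P v = i then min (ω u v) (G.w u v) else ω u v)
    else G.w u v

/-- Graph obtained from `G` by adding, for every pair `u v ∈ S`, a shortcut edge
of weight `dist G u v` (taking the minimum with an already-existing edge weight). -/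
noncomputable def shortcut (G : WGraph V) (S : Set V) : WGraph V where
  Adj u v := G.Adj u v ∨ (u ∈ S ∧ v ∈ S)
  symm := by
    rintro u v (h | ⟨h1, h2⟩)
    · exact Or.inl (G.symm h)
    · exact Or.inr ⟨h2, h1⟩
  w u v :=
    if u ∈ S ∧ v ∈ S then
      (if G.Adj u v then min (dist G u v) (G.w u v) else dist G u v)
    else G.w u v

/-- Vertex-splitting construction: each cut vertex `x ∈ X` keeps its neighbors in
group `N x 0`; for `1 ≤ i ≤ l x` a duplicate `(x, i)` is created, connected to the
vertices of `N x i` with the original weights and to `x` by a zero-weight edge. -/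
noncomputable def split (G : WGraph V) (X : Set V) (N : V → ℕ → Set V) (l : V → ℕ) :
    WGraph (V ⊕ V × ℕ) where
  Adj a b := match a, b with
    | .inl u, .inl v => G.Adj u v ∧ (u ∈ X → v ∈ N u 0) ∧ (v ∈ X → u ∈ N v 0)
    | .inl v, .inr (x, i) => x ∈ X ∧ 1 ≤ i ∧ i ≤ l x ∧ ((G.Adj x v ∧ v ∈ N x i) ∨ v = x)
    | .inr (x, i), .inl v => x ∈ X ∧ 1 ≤ i ∧ i ≤ l x ∧ ((G.Adj x v ∧ v ∈ N x i) ∨ v = x)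
    | .inr _, .inr _ => False
  symm := by
    rintro (u | ⟨x, i⟩) (v | ⟨y, j⟩) h
    · exact ⟨G.symm h.1, h.2.2, h.2.1⟩
    · exact h
    · exact h
    · exact h.elim
  w a b := match a, b with
    | .inl u, .inl v => G.w u v
    | .inl v, .inr (x, _) => if v = x then 0 else G.w x v
    | .inr (x, _), .inl v => if v = x then 0 else G.w x v
    | .inr _, .inr _ => 0

/-!
Every overlay edge weighs at least the `G`-distance of its endpoints (a local distance in `G_i`
dominates the distance in `G`), so `d_G ≤ d_G̃`. Conversely, cut a walk of `G` between boundary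
vertices at its inter-partition edges: each piece stays inside one partition and runs between two
boundary vertices, so it is dominated by a single overlay edge, and the cut edges are overlay
edges themselves.
-/

section Walks

variable {G : WGraph V}

lemma IsWalk.not_nil {s t : V} : ¬ IsWalk G s t [] := by
  simp [IsWalk]

lemma isWalk_singleton (G : WGraph V) (a : V) : IsWalk G a a [a] :=
  ⟨List.isChain_singleton a, rfl, rfl⟩

lemma isWalk_pair {a c : V} (h : G.Adj a c) : IsWalk G a c [a, c] :=
  ⟨List.isChain_pair.mpr h, rfl, rfl⟩

lemma IsWalk.cons {a c t : V} {l : List V} (h : G.Adj a c) (hl : IsWalk G c t l) :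
    IsWalk G a t (a :: l) := by
  obtain ⟨hch, hhd, hlast⟩ := hl
  cases l with
  | nil => simp at hhd
  | cons e r =>
    obtain rfl : e = c := by simpa using hhd
    exact ⟨List.isChain_cons_cons.mpr ⟨h, hch⟩, rfl, by simpa [List.getLast?_cons_cons] using hlast⟩

lemma wlen_cons_cons (G : WGraph V) (a c : V) (r : List V) :
    wlen G (a :: c :: r) = G.w a c + wlen G (c :: r) := rfl

theorem IsWalk.induction {t : V} {motive : (a : V) → (l : List V) → IsWalk G a t l → Prop}
    (singleton : motive t [t] (isWalk_singleton G t))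
    (cons : ∀ a c r (hac : G.Adj a c) (hr : IsWalk G c t (c :: r)), motive c (c :: r) hr →
      motive a (a :: c :: r) (hr.cons hac))
    {a : V} {l : List V} (h : IsWalk G a t l) : motive a l h := by
  induction l generalizing a with
  | nil => exact absurd h IsWalk.not_nil
  | cons x l ih =>
    obtain ⟨hch, hhd, hlast⟩ := h
    obtain rfl : x = a := by simpa using hhd
    cases l with
    | nil =>
      obtain rfl : x = t := by simpa using hlast
      exact singleton
    | cons c r =>
      obtain ⟨hxc, hr⟩ := List.isChain_cons_cons.mp hch
      have hw : IsWalk G c t (c :: r) :=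
        ⟨hr, rfl, by simpa [List.getLast?_cons_cons] using hlast⟩
      exact cons x c r hxc hw (ih hw)

end Walks

section Distance

variable {G : WGraph V}

lemma dist_le_wlen {s t : V} {l : List V} (h : IsWalk G s t l) : dist G s t ≤ wlen G l :=
  sInf_le ⟨l, h, rfl⟩

lemma le_dist_of_forall_isWalk {s t : V} {x : ℝ≥0∞}
    (h : ∀ l, IsWalk G s t l → x ≤ wlen G l) : x ≤ dist G s t :=
  le_sInf fun _ ⟨l, hl, hx⟩ => hx ▸ h l hl

lemma dist_self (G : WGraph V) (a : V) : dist G a a = 0 :=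
  nonpos_iff_eq_zero.mp (dist_le_wlen (isWalk_singleton G a))

lemma dist_le_weight {u v : V} (h : G.Adj u v) : dist G u v ≤ G.w u v := by
  simpa [wlen, pairSum] using dist_le_wlen (isWalk_pair h)

lemma dist_le_weight_add_dist {a c t : V} (h : G.Adj a c) :
    dist G a t ≤ G.w a c + dist G c t := by
  conv_rhs => rw [dist, ENNReal.add_sInf]
  refine le_iInf₂ fun _ ⟨l, hl, hx⟩ => hx ▸ ?_
  calc dist G a t ≤ wlen G (a :: l) := dist_le_wlen (hl.cons h)
    _ = G.w a c + wlen G l := by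
      obtain _ | ⟨e, r⟩ := l
      · exact absurd hl IsWalk.not_nil
      · obtain rfl : e = c := by simpa using hl.2.1
        rfl

lemma dist_le_wlen_add_dist {a b : V} (c : V) {l : List V} (hl : IsWalk G a b l) :
    dist G a c ≤ wlen G l + dist G b c := by
  induction hl using IsWalk.induction with
  | singleton => simp [wlen, pairSum]
  | cons a d r had _ ih =>
    calc dist G a c ≤ G.w a d + dist G d c := dist_le_weight_add_dist had
      _ ≤ G.w a d + (wlen G (d :: r) + dist G b c) := add_le_add_right ih _
      _ = wlen G (a :: d :: r) + dist G b c := by rw [wlen_cons_cons, add_assoc]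

theorem dist_triangle (G : WGraph V) (a b c : V) : dist G a c ≤ dist G a b + dist G b c := by
  conv_rhs => rw [dist, ENNReal.sInf_add]
  exact le_iInf₂ fun _ ⟨l, hl, hx⟩ => hx ▸ dist_le_wlen_add_dist c hl

theorem dist_le_dist_of_forall_adj {G' : WGraph V}
    (h : ∀ u v, G'.Adj u v → dist G u v ≤ G'.w u v) (s t : V) :
    dist G s t ≤ dist G' s t := by
  refine le_dist_of_forall_isWalk fun l hl => ?_
  induction hl using IsWalk.induction with
  | singleton => simp [dist_self]
  | cons a c r hac _ ih =>
    calc dist G a t ≤ dist G a c + dist G c t := dist_triangle G a c t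
      _ ≤ G'.w a c + wlen G' (c :: r) := add_le_add (h a c hac) ih
      _ = wlen G' (a :: c :: r) := (wlen_cons_cons G' a c r).symm

lemma dist_le_dist_induce (S : Set V) (u v : V) : dist G u v ≤ dist (induce G S) u v :=
  dist_le_dist_of_forall_adj (G' := induce G S) (fun _ _ h => dist_le_weight (G := G) h.1) u v

end Distance

section Overlay

variable {G : WGraph V} {P : V → ι}

lemma overlay_w_of_eq {u v : V} (h : P u = P v) :
    (overlay G P).w u v = dist (partGraph G P (P u)) u v := if_pos h

lemma overlay_w_of_ne {u v : V} (h : P u ≠ P v) : (overlay G P).w u v = G.w u v := if_neg h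

lemma dist_le_overlay_w {u v : V} (h : (overlay G P).Adj u v) :
    dist G u v ≤ (overlay G P).w u v := by
  rcases h with ⟨hP, -, -⟩ | ⟨hP, hadj⟩
  · rw [overlay_w_of_eq hP]
    exact dist_le_dist_induce _ u v
  · rw [overlay_w_of_ne hP]
    exact dist_le_weight hadj

lemma dist_overlay_le_dist_partGraph {a b : V} (hb : b ∈ bdry G P) (ha : a ∈ bdry G P)
    (hP : P b = P a) : dist (overlay G P) b a ≤ dist (partGraph G P (P a)) b a := by
  simpa only [overlay_w_of_eq hP, hP] using dist_le_weight (G := overlay G P) (Or.inl ⟨hP, hb, ha⟩)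

lemma dist_overlay_le_w {a c : V} (hac : G.Adj a c) (hP : P a ≠ P c) :
    dist (overlay G P) a c ≤ G.w a c := by
  simpa only [overlay_w_of_ne hP] using dist_le_weight (G := overlay G P) (Or.inr ⟨hP, hac⟩)

/-- `b` is the boundary vertex at which the walk entered the partition of `a`. -/
theorem dist_overlay_le_dist_partGraph_add_wlen {t : V} (ht : t ∈ bdry G P) {a : V} {l : List V}
    (hl : IsWalk G a t l) {b : V} (hb : b ∈ bdry G P) (hP : P b = P a) :
    dist (overlay G P) b t ≤ dist (partGraph G P (P a)) b a + wlen G l := by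
  induction hl using IsWalk.induction generalizing b with
  | singleton => simpa [wlen, pairSum] using dist_overlay_le_dist_partGraph hb ht hP
  | cons a c r hac _ ih =>
    rw [wlen_cons_cons]
    by_cases hPc : P c = P a
    · have hlocal : dist (partGraph G P (P a)) b c ≤ dist (partGraph G P (P a)) b a + G.w a c :=
        (dist_triangle _ b a c).trans
          (add_le_add_right (dist_le_weight (G := partGraph G P (P a)) ⟨hac, rfl, hPc⟩) _)
      calc dist (overlay G P) b t ≤ dist (partGraph G P (P a)) b c + wlen G (c :: r) :=
            hPc ▸ ih hb (hP.trans hPc.symm)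
        _ ≤ _ := by rw [← add_assoc]; exact add_le_add_left hlocal _
    · have ha : a ∈ bdry G P := ⟨c, hac, hPc⟩
      have hc : c ∈ bdry G P := ⟨a, G.symm hac, fun h => hPc h.symm⟩
      have hct : dist (overlay G P) c t ≤ wlen G (c :: r) := by
        simpa [dist_self] using ih hc rfl
      calc dist (overlay G P) b t
          ≤ dist (overlay G P) b a + (dist (overlay G P) a c + dist (overlay G P) c t) :=
            (dist_triangle _ b a t).trans (add_le_add_right (dist_triangle _ a c t) _)
        _ ≤ _ := add_le_add (dist_overlay_le_dist_partGraph hb ha hP)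
            (add_le_add (dist_overlay_le_w hac (Ne.symm hPc)) hct)

end Overlay

/-- Theorem 1, No-Boundary correctness on boundary pairs:
for all boundary vertices `s t`, `d_G(s,t) = d_G̃(s,t)`. -/
theorem stmt1 {V ι : Type*} (G : WGraph V) (P : V → ι) (s t : V)
    (hs : s ∈ bdry G P) (ht : t ∈ bdry G P) :
    dist G s t = dist (overlay G P) s t := by
  refine le_antisymm (dist_le_dist_of_forall_adj (fun _ _ => dist_le_overlay_w) s t) ?_
  refine le_dist_of_forall_isWalk fun l hl => ?_
  simpa [dist_self] using dist_overlay_le_dist_partGraph_add_wlen ht hl hs rfl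

end PSP
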